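/- Let R be a DGA over A with R_i = 0 for i < 0 and F a DG right R-module with F_i = 0 for i < 0. Let C_• and D_• be free graded A-modules with finite bases B and B′ (all degrees ≥ 0), m^C and m^D twisting cocycles for (R, C_•) and (R, D_•), ν = (ν_{x,y}) a continuation cocycle from m^C to m^D, and Ψ^F : C_*(C_•,F) → C_*(D_•,F), Ψ^F(α⊗x) = Σ_{y∈B′} (α·ν_{x,y})⊗y, the induced chain map between the twisted complexes. Let C̃_• and D̃_• be the lifted complexes over H_0(R) := R_0/∂(R_1) associated to m^C and m^D, and define Ψ̃ : C̃_• → D̃_• by Ψ̃(x) = Σ_{y∈B′, |y|=|x|} n_{x,y} y, where n_{x,y} ∈ H_0(R) is the class of ν_{x,y}. Then Ψ̃ is a chain map of complexes of left H_0(R)-modules, and if Ψ̃ is a quasi-isomorphism then Ψ^F is a quasi-isomorphism. -/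
import Mathlib

set_option linter.unusedSectionVars false
set_option maxHeartbeats 1000000

/-- A chain map `f` between two `ℤ`-graded complexes (graded pieces `Mdeg`, `Ndeg`,
differentials `dM`, `dN` of degree `-1`) is a quasi-isomorphism: it induces an isomorphism
on homology in every degree. -/
def GradedQuasiIso {M N : Type*} [AddCommGroup M] [AddCommGroup N]
    (Mdeg : ℤ → Set M) (Ndeg : ℤ → Set N)
    (dM : M → M) (dN : N → N) (f : M → N) : Prop :=
  ∀ n : ℤ,
    (∀ y ∈ Ndeg n, dN y = 0 →
      ∃ x ∈ Mdeg n, dM x = 0 ∧ ∃ z ∈ Ndeg (n + 1), f x - y = dN z) ∧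
    (∀ x ∈ Mdeg n, dM x = 0 → (∃ w ∈ Ndeg (n + 1), f x = dN w) →
      ∃ v ∈ Mdeg (n + 1), x = dM v)



namespace Statement9Aux

lemma npow_congr {a b : ℤ} (h : (a - b) % 2 = 0) :
    (a.negOnePow : ℤ) = (b.negOnePow : ℤ) := by
  norm_cast
  rw [Int.negOnePow_eq_iff, Int.even_iff]; omega

lemma npow_anti {a b : ℤ} (h : (a - b) % 2 = 1) :
    (a.negOnePow : ℤ) = -(b.negOnePow : ℤ) := by
  have : a.negOnePow = (b+1).negOnePow := by
    rw [Int.negOnePow_eq_iff, Int.even_iff]; omega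
  rw [this, Int.negOnePow_succ]; push_cast; ring

lemma npowZ_mul (a b : ℤ) :
    (a.negOnePow : ℤ) * (b.negOnePow : ℤ) = ((a + b).negOnePow : ℤ) := by
  rw [Int.negOnePow_add]; push_cast; ring

lemma npow_smul_smul {M : Type*} [AddCommGroup M] {a b : ℤ} (x : M)
    (h : (a + b) % 2 = 0) : (a.negOnePow : ℤ) • (b.negOnePow : ℤ) • x = x := by
  rw [← mul_smul, npowZ_mul,
    show ((a+b).negOnePow : ℤ) = ((0:ℤ).negOnePow : ℤ) from npow_congr (by omega)]
  simp

section Generic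

variable {A : Type*} [CommRing A] {R : Type*} [Ring R] [Algebra A R]
  {F : Type*} [AddCommGroup F] [Module A F]

/-- Bundled DG-algebra/module axioms. -/
structure Setup (ℛ : ℤ → Submodule A R) (ℱ : ℤ → Submodule A F)
    (d : R →ₗ[A] R) (dF : F →ₗ[A] F) (act : F →ₗ[A] R →ₗ[A] F) : Prop where
  hmul : ∀ {i j : ℤ} {a b : R}, a ∈ ℛ i → b ∈ ℛ j → a * b ∈ ℛ (i + j)
  hd_mem : ∀ i : ℤ, ∀ a ∈ ℛ i, d a ∈ ℛ (i - 1)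
  hdF_mem : ∀ i : ℤ, ∀ f ∈ ℱ i, dF f ∈ ℱ (i - 1)
  hdF_sq : ∀ f : F, dF (dF f) = 0
  hact_one : ∀ f : F, act f 1 = f
  hact_mul : ∀ (f : F) (a b : R), act (act f a) b = act f (a * b)
  hact_mem : ∀ (i j : ℤ), ∀ f ∈ ℱ i, ∀ a ∈ ℛ j, act f a ∈ ℱ (i + j)
  hact_leibniz : ∀ i : ℤ, ∀ f ∈ ℱ i, ∀ a : R,
    dF (act f a) = act (dF f) a + (Int.negOnePow i : ℤ) • act f (d a)

variable {ι : Type*} [Fintype ι] [DecidableEq ι]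

/-- Bundled twisting-cocycle axioms. -/
structure Twist (ℛ : ℤ → Submodule A R) (d : R →ₗ[A] R)
    (deg : ι → ℤ) (m : ι → ι → R) : Prop where
  mem : ∀ e e', m e e' ∈ ℛ (deg e - deg e' - 1)
  strict : ∀ e e', ¬ deg e' < deg e → m e e' = 0
  mc : ∀ e e', d (m e e') =
    ∑ e₁, ((deg e - deg e₁).negOnePow : ℤ) • (m e e₁ * m e₁ e')

variable (dF : F →ₗ[A] F) (act : F →ₗ[A] R →ₗ[A] F) (deg : ι → ℤ) (m : ι → ι → R)

/-- The twisted differential on homogeneous elements of total degree `n`. -/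
def TD (n : ℤ) (g : ι → F) : ι → F :=
  fun e => dF (g e) + ∑ e', ((n - deg e').negOnePow : ℤ) • act (g e') (m e' e)

variable {ℛ : ℤ → Submodule A R} {ℱ : ℤ → Submodule A F} {d : R →ₗ[A] R}
  {dF} {act} {deg} {m}

lemma mem_cast {i j : ℤ} {x : F} (h : x ∈ ℱ i) (hij : i = j) : x ∈ ℱ j := hij ▸ h

lemma TD_mem (hS : Setup ℛ ℱ d dF act) (hT : Twist ℛ d deg m)
    {n : ℤ} {g : ι → F} (hg : ∀ e, g e ∈ ℱ (n - deg e)) :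
    ∀ e, TD dF act deg m n g e ∈ ℱ (n - 1 - deg e) := by
  intro e
  refine add_mem (mem_cast (hS.hdF_mem _ _ (hg e)) (by ring)) (Submodule.sum_mem _ ?_)
  intro e' _
  exact Submodule.smul_of_tower_mem _ _
    (mem_cast (hS.hact_mem _ _ _ (hg e') _ (hT.mem e' e)) (by ring))

lemma TD_add (n : ℤ) (g g' : ι → F) :
    TD dF act deg m n (g + g') = TD dF act deg m n g + TD dF act deg m n g' := by
  funext e
  simp only [TD, Pi.add_apply, map_add, LinearMap.add_apply, smul_add,
    Finset.sum_add_distrib]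
  abel

lemma TD_zero (n : ℤ) : TD dF act deg m n (0 : ι → F) = 0 := by
  funext e; simp [TD]

lemma TD_sub (n : ℤ) (g g' : ι → F) :
    TD dF act deg m n (g - g') = TD dF act deg m n g - TD dF act deg m n g' := by
  funext e
  simp only [TD, Pi.sub_apply, map_sub, LinearMap.sub_apply, smul_sub,
    Finset.sum_sub_distrib]
  abel

end Generic

end Statement9Aux

namespace Statement9Aux
section Generic
variable {A : Type*} [CommRing A] {R : Type*} [Ring R] [Algebra A R]
  {F : Type*} [AddCommGroup F] [Module A F]
  {ι : Type*} [Fintype ι] [DecidableEq ι]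
  {ℛ : ℤ → Submodule A R} {ℱ : ℤ → Submodule A F} {d : R →ₗ[A] R}
  {dF : F →ₗ[A] F} {act : F →ₗ[A] R →ₗ[A] F} {deg : ι → ℤ} {m : ι → ι → R}

lemma TD_sq (hS : Setup ℛ ℱ d dF act) (hT : Twist ℛ d deg m)
    {n : ℤ} {g : ι → F} (hg : ∀ e, g e ∈ ℱ (n - deg e)) :
    TD dF act deg m (n-1) (TD dF act deg m n g) = 0 := by
  funext e''
  show dF ((TD dF act deg m n g) e'')
      + ∑ e', ((n-1-deg e').negOnePow : ℤ) • act ((TD dF act deg m n g) e') (m e' e'') = 0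
  have h1 : dF ((TD dF act deg m n g) e'') =
      (∑ e', ((n - deg e').negOnePow : ℤ) • act (dF (g e')) (m e' e''))
      + ∑ e', act (g e') (d (m e' e'')) := by
    simp only [TD, map_add, map_sum, map_zsmul, hS.hdF_sq, zero_add,
      ← Finset.sum_add_distrib]
    refine Finset.sum_congr rfl fun e' _ => ?_
    rw [hS.hact_leibniz _ _ (hg e'), smul_add, npow_smul_smul _ (by omega)]
  have h2 : ∀ e', act ((TD dF act deg m n g) e') (m e' e'') =
      act (dF (g e')) (m e' e'')
      + ∑ a, ((n - deg a).negOnePow : ℤ) • act (g a) (m a e' * m e' e'') := by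
    intro e'
    simp only [TD, map_add, map_sum, map_zsmul, LinearMap.add_apply,
      LinearMap.sum_apply, LinearMap.smul_apply]
    congr 1
    exact Finset.sum_congr rfl fun a _ => by rw [hS.hact_mul]
  rw [h1]
  have h3 : ∑ e', ((n-1-deg e').negOnePow : ℤ) • act ((TD dF act deg m n g) e') (m e' e'') =
      (-∑ e', ((n - deg e').negOnePow : ℤ) • act (dF (g e')) (m e' e''))
      + -∑ a, act (g a) (d (m a e'')) := by
    simp only [h2, smul_add, Finset.sum_add_distrib, Finset.smul_sum]
    congr 1
    · rw [← Finset.sum_neg_distrib]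
      refine Finset.sum_congr rfl fun e' _ => ?_
      rw [npow_anti (a := n-1-deg e') (b := n - deg e') (by omega), neg_smul]
    · rw [Finset.sum_comm, ← Finset.sum_neg_distrib]
      refine Finset.sum_congr rfl fun a _ => ?_
      rw [hT.mc a e'', map_sum, ← Finset.sum_neg_distrib]
      refine Finset.sum_congr rfl fun e' _ => ?_
      rw [map_zsmul, ← mul_smul, npowZ_mul,
        npow_anti (a := (n-1-deg e') + (n - deg a)) (b := deg a - deg e') (by omega),
        neg_smul]
  rw [h3]
  abel
end Generic
end Statement9Aux


namespace Statement9Aux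
section Generic2
variable {A : Type*} [CommRing A] {R : Type*} [Ring R] [Algebra A R]
  {F : Type*} [AddCommGroup F] [Module A F]
  {ι : Type*} [Fintype ι] [DecidableEq ι]

variable (act : F →ₗ[A] R →ₗ[A] F) (deg : ι → ℤ)

/-- The homotopy candidate built from lifted matrices `hh` (degree `+1`) and
`uu` (the `ℛ 1` correction). -/
def KK (hh uu : ι → ι → R) (n : ℤ) (g : ι → F) : ι → F :=
  fun e'' => ∑ e, ((n - deg e).negOnePow : ℤ) • act (g e) (hh e e'' - uu e e'')

/-- The full coefficient of `act (g a)` in `D K' + K' D`. -/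
def QQ (d : R →ₗ[A] R) (m hh uu : ι → ι → R) (a e'' : ι) : R :=
  (∑ e', ((1 + deg e' + deg a).negOnePow : ℤ) • ((hh a e' - uu a e') * m e' e''))
  + (∑ b, ((1 + deg a + deg b).negOnePow : ℤ) • (m a b * (hh b e'' - uu b e'')))
  - d (uu a e'')

/-- The strictly-lower-triangular error term. -/
def tt (d : R →ₗ[A] R) (m hh uu : ι → ι → R) (a e'' : ι) : R :=
  if deg e'' = deg a then 0 else QQ deg d m hh uu a e''

variable {ℛ : ℤ → Submodule A R} {ℱ : ℤ → Submodule A F} {d : R →ₗ[A] R}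
  {dF : F →ₗ[A] F} {act : F →ₗ[A] R →ₗ[A] F} {deg : ι → ℤ} {m : ι → ι → R}
  {hh uu : ι → ι → R}

section WithHyp
variable (hS : Setup ℛ ℱ d dF act) (hT : Twist ℛ d deg m)
  (hh_mem : ∀ e e', hh e e' ∈ ℛ 0)
  (hh_supp : ∀ e e', deg e' ≠ deg e + 1 → hh e e' = 0)
  (hdh : ∀ e e', d (hh e e') = 0)
  (uu_mem : ∀ e e', uu e e' ∈ ℛ 1)
  (uu_supp : ∀ e e', deg e' ≠ deg e → uu e e' = 0)

include hS hh_mem hh_supp uu_mem uu_supp in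
lemma KK_mem {n : ℤ} {g : ι → F} (hg : ∀ e, g e ∈ ℱ (n - deg e)) :
    ∀ e'', KK act deg hh uu n g e'' ∈ ℱ (n + 1 - deg e'') := by
  intro e''
  refine Submodule.sum_mem _ fun e _ => Submodule.smul_of_tower_mem _ _ ?_
  rw [map_sub]
  refine sub_mem ?_ ?_
  · by_cases h : deg e'' = deg e + 1
    · exact mem_cast (hS.hact_mem _ _ _ (hg e) _ (hh_mem e e'')) (by omega)
    · rw [hh_supp e e'' h, map_zero]; exact Submodule.zero_mem _
  · by_cases h : deg e'' = deg e
    · exact mem_cast (hS.hact_mem _ _ _ (hg e) _ (uu_mem e e'')) (by omega)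
    · rw [uu_supp e e'' h, map_zero]; exact Submodule.zero_mem _

lemma KK_zero (n : ℤ) : KK act deg hh uu n (0 : ι → F) = 0 := by
  funext e''; simp [KK]

include hS hT hdh in
lemma RAW {n : ℤ} {g : ι → F} (hg : ∀ e, g e ∈ ℱ (n - deg e)) :
    TD dF act deg m (n+1) (KK act deg hh uu n g)
      + KK act deg hh uu (n-1) (TD dF act deg m n g)
    = fun e'' => ∑ a, act (g a) (QQ deg d m hh uu a e'') := by
  funext e''
  have hw : ∀ a e', d (hh a e' - uu a e') = - d (uu a e') := by
    intro a e'; rw [map_sub, hdh]; abel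
  show dF (KK act deg hh uu n g e'')
      + (∑ e', ((n+1 - deg e').negOnePow : ℤ) •
          act (KK act deg hh uu n g e') (m e' e''))
      + KK act deg hh uu (n-1) (TD dF act deg m n g) e''
    = _
  have hdFK : dF (KK act deg hh uu n g e'') =
      (∑ e, ((n - deg e).negOnePow : ℤ) • act (dF (g e)) (hh e e'' - uu e e''))
      + ∑ e, act (g e) (- d (uu e e'')) := by
    simp only [KK, map_sum, map_zsmul, ← Finset.sum_add_distrib]
    refine Finset.sum_congr rfl fun e _ => ?_
    rw [hS.hact_leibniz _ _ (hg e), smul_add, npow_smul_smul _ (by omega), hw]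
  have hactK : ∀ e', act (KK act deg hh uu n g e') (m e' e'') =
      ∑ e, ((n - deg e).negOnePow : ℤ) • act (g e) ((hh e e' - uu e e') * m e' e'') := by
    intro e'
    simp only [KK, map_sum, map_zsmul, LinearMap.sum_apply, LinearMap.smul_apply]
    exact Finset.sum_congr rfl fun e _ => by rw [hS.hact_mul]
  have hKTD : KK act deg hh uu (n-1) (TD dF act deg m n g) e'' =
      (∑ e, (-((n - deg e).negOnePow : ℤ)) • act (dF (g e)) (hh e e'' - uu e e''))
      + ∑ b, ∑ a, ((1 + deg a + deg b).negOnePow : ℤ) •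
          act (g a) (m a b * (hh b e'' - uu b e'')) := by
    simp only [KK, TD, map_add, map_sum, map_zsmul, LinearMap.add_apply,
      LinearMap.sum_apply, LinearMap.smul_apply, smul_add, Finset.smul_sum,
      Finset.sum_add_distrib]
    congr 1
    · refine Finset.sum_congr rfl fun e _ => ?_
      rw [npow_anti (a := n - 1 - deg e) (b := n - deg e) (by omega), neg_smul,
        ← neg_smul]
    · refine Finset.sum_congr rfl fun b _ => Finset.sum_congr rfl fun a _ => ?_
      rw [hS.hact_mul, ← mul_smul, npowZ_mul,
        npow_congr (a := n - 1 - deg b + (n - deg a)) (b := 1 + deg a + deg b)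
          (by omega)]
  have hsum2 : (∑ e', ((n+1 - deg e').negOnePow : ℤ) •
      act (KK act deg hh uu n g e') (m e' e''))
      = ∑ e, ∑ e', ((1 + deg e' + deg e).negOnePow : ℤ) •
          act (g e) ((hh e e' - uu e e') * m e' e'') := by
    simp only [hactK, Finset.smul_sum]
    rw [Finset.sum_comm]
    refine Finset.sum_congr rfl fun e _ => Finset.sum_congr rfl fun e' _ => ?_
    rw [← mul_smul, npowZ_mul,
      npow_congr (a := n + 1 - deg e' + (n - deg e)) (b := 1 + deg e' + deg e)
        (by omega)]
  have hRHS : ∀ a, act (g a) (QQ deg d m hh uu a e'') =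
      (∑ e', ((1 + deg e' + deg a).negOnePow : ℤ) •
        act (g a) ((hh a e' - uu a e') * m e' e''))
      + (∑ b, ((1 + deg a + deg b).negOnePow : ℤ) •
        act (g a) (m a b * (hh b e'' - uu b e'')))
      + act (g a) (- d (uu a e'')) := by
    intro a
    rw [QQ, sub_eq_add_neg, map_add, map_add, map_sum, map_sum, map_neg]
    simp only [map_zsmul]
  rw [hdFK, hKTD, hsum2]
  have hRHS2 : ∑ a, act (g a) (QQ deg d m hh uu a e'') =
      (∑ e, ∑ e', ((1 + deg e' + deg e).negOnePow : ℤ) •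
        act (g e) ((hh e e' - uu e e') * m e' e''))
      + (∑ b, ∑ a, ((1 + deg a + deg b).negOnePow : ℤ) •
        act (g a) (m a b * (hh b e'' - uu b e'')))
      + ∑ e, act (g e) (- d (uu e e'')) := by
    simp only [hRHS, Finset.sum_add_distrib]
    congr 1
    congr 1
    exact Finset.sum_comm
  rw [hRHS2]
  have hneg : (∑ e, (-((n - deg e).negOnePow:ℤ)) • act (dF (g e)) (hh e e'' - uu e e''))
      = -∑ e, ((n - deg e).negOnePow : ℤ) • act (dF (g e)) (hh e e'' - uu e e'') := by
    rw [← Finset.sum_neg_distrib]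
    exact Finset.sum_congr rfl fun e _ => neg_smul _ _
  rw [hneg]
  abel
end WithHyp
end Generic2
end Statement9Aux


namespace Statement9Aux
section Generic3
variable {A : Type*} [CommRing A] {R : Type*} [Ring R] [Algebra A R]
  {F : Type*} [AddCommGroup F] [Module A F]
  {ι : Type*} [Fintype ι] [DecidableEq ι]
  {ℛ : ℤ → Submodule A R} {ℱ : ℤ → Submodule A F} {d : R →ₗ[A] R}
  {dF : F →ₗ[A] F} {act : F →ₗ[A] R →ₗ[A] F} {deg : ι → ℤ} {m : ι → ι → R}
  {hh uu : ι → ι → R}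

section Split
variable (hT : Twist ℛ d deg m)
  (hh_supp : ∀ e e', deg e' ≠ deg e + 1 → hh e e' = 0)
  (uu_supp : ∀ e e', deg e' ≠ deg e → uu e e' = 0)
  (hHYP : ∀ e e'', deg e'' = deg e →
    (∑ e', hh e e' * m e' e'') + (∑ b, m e b * hh b e'')
      = (if e'' = e then 1 else 0) + d (uu e e''))

include hT hh_supp uu_supp hHYP in
lemma QQ_split : ∀ a e'', QQ deg d m hh uu a e''
    = (if e'' = a then 1 else 0) + tt deg d m hh uu a e'' := by
  intro a e''
  rw [tt]
  by_cases hd : deg e'' = deg a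
  · rw [if_pos hd, add_zero, QQ]
    have h1 : (∑ e', ((1 + deg e' + deg a).negOnePow : ℤ) •
        ((hh a e' - uu a e') * m e' e'')) = ∑ e', hh a e' * m e' e'' := by
      refine Finset.sum_congr rfl fun e' _ => ?_
      by_cases h : deg e' = deg a + 1
      · rw [uu_supp a e' (by omega), sub_zero,
          npow_congr (a := 1 + deg e' + deg a) (b := 0) (by omega),
          Int.negOnePow_zero, Units.val_one, one_smul]
      · by_cases h2 : deg e' = deg a
        · simp [hT.strict e' e'' (by omega)]
        · simp [hh_supp a e' h, uu_supp a e' h2]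
    have h2 : (∑ b, ((1 + deg a + deg b).negOnePow : ℤ) •
        (m a b * (hh b e'' - uu b e''))) = ∑ b, m a b * hh b e'' := by
      refine Finset.sum_congr rfl fun b _ => ?_
      by_cases h : deg e'' = deg b + 1
      · rw [uu_supp b e'' (by omega), sub_zero,
          npow_congr (a := 1 + deg a + deg b) (b := 0) (by omega),
          Int.negOnePow_zero, Units.val_one, one_smul]
      · by_cases h2 : deg e'' = deg b
        · simp [hT.strict a b (by omega)]
        · simp [hh_supp b e'' h, uu_supp b e'' h2]
    rw [h1, h2, hHYP a e'' hd, add_sub_cancel_right]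
  · rw [if_neg hd, if_neg (fun h : e'' = a => hd (by rw [h])), zero_add]

include hT hh_supp uu_supp in
lemma tt_strict : ∀ a e'', ¬ deg e'' < deg a → tt deg d m hh uu a e'' = 0 := by
  intro a e'' h
  rw [tt]
  by_cases hd : deg e'' = deg a
  · rw [if_pos hd]
  · rw [if_neg hd, QQ]
    have hlt : deg a < deg e'' := by omega
    have h1 : (∑ e', ((1 + deg e' + deg a).negOnePow : ℤ) •
        ((hh a e' - uu a e') * m e' e'')) = 0 := by
      refine Finset.sum_eq_zero fun e' _ => ?_
      by_cases hm : deg e'' < deg e'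
      · rw [hh_supp a e' (by omega), uu_supp a e' (by omega), sub_zero,
          zero_mul, smul_zero]
      · rw [hT.strict e' e'' hm, mul_zero, smul_zero]
    have h2 : (∑ b, ((1 + deg a + deg b).negOnePow : ℤ) •
        (m a b * (hh b e'' - uu b e''))) = 0 := by
      refine Finset.sum_eq_zero fun b _ => ?_
      by_cases hm : deg b < deg a
      · rw [hh_supp b e'' (by omega), uu_supp b e'' (by omega), sub_zero,
          mul_zero, smul_zero]
      · rw [hT.strict a b hm, zero_mul, smul_zero]
    rw [h1, h2, uu_supp a e'' hd, map_zero, add_zero, sub_zero]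
end Split

section Exact
variable (hS : Setup ℛ ℱ d dF act) (hT : Twist ℛ d deg m)
  (hdeg0 : ∀ e, 0 ≤ deg e)
  (hh_mem : ∀ e e', hh e e' ∈ ℛ 0)
  (hh_supp : ∀ e e', deg e' ≠ deg e + 1 → hh e e' = 0)
  (hdh : ∀ e e', d (hh e e') = 0)
  (uu_mem : ∀ e e', uu e e' ∈ ℛ 1)
  (uu_supp : ∀ e e', deg e' ≠ deg e → uu e e' = 0)
  (hHYP : ∀ e e'', deg e'' = deg e →
    (∑ e', hh e e' * m e' e'') + (∑ b, m e b * hh b e'')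
      = (if e'' = e then 1 else 0) + d (uu e e''))

include hS hT hdeg0 hh_mem hh_supp hdh uu_mem uu_supp hHYP in
lemma contraction_exact :
    ∀ (n : ℤ) (g : ι → F), (∀ e, g e ∈ ℱ (n - deg e)) →
      TD dF act deg m n g = 0 →
      ∃ h', (∀ e, h' e ∈ ℱ (n + 1 - deg e)) ∧ g = TD dF act deg m (n+1) h' := by
  have key : ∀ (n : ℤ) (g : ι → F), (∀ e, g e ∈ ℱ (n - deg e)) →
      TD dF act deg m n g = 0 →
      g = TD dF act deg m (n+1) (KK act deg hh uu n g)
        - fun e'' => ∑ a, act (g a) (tt deg d m hh uu a e'') := by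
    intro n g hg hc
    have hraw := RAW (uu := uu) hS hT hdh hg
    rw [hc, KK_zero, add_zero] at hraw
    funext e''
    rw [Pi.sub_apply, hraw]
    have hsplit : ∀ a, act (g a) (QQ deg d m hh uu a e'')
        = act (g a) (if e'' = a then (1:R) else 0)
          + act (g a) (tt deg d m hh uu a e'') := fun a => by
      rw [← map_add, ← QQ_split hT hh_supp uu_supp hHYP]
    simp only [hsplit, Finset.sum_add_distrib]
    have hdiag : ∑ a, act (g a) (if e'' = a then (1:R) else 0) = g e'' := by
      rw [Finset.sum_eq_single e'']
      · rw [if_pos rfl, hS.hact_one]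
      · intro a _ ha
        rw [if_neg (fun h : e'' = a => ha h.symm), map_zero]
      · intro h; exact absurd (Finset.mem_univ e'') h
    rw [hdiag, add_sub_cancel_right]
  have main : ∀ (k : ℕ) (n : ℤ) (g : ι → F), (∀ e, g e ∈ ℱ (n - deg e)) →
      TD dF act deg m n g = 0 → (∀ e, (k:ℤ) ≤ deg e → g e = 0) →
      ∃ h', (∀ e, h' e ∈ ℱ (n + 1 - deg e)) ∧ g = TD dF act deg m (n+1) h' := by
    intro k
    induction k with
    | zero =>
      intro n g hg hc hsupp
      have hg0 : g = 0 := funext fun e => hsupp e (by exact_mod_cast hdeg0 e)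
      exact ⟨0, fun e => Submodule.zero_mem _, by rw [hg0, TD_zero]⟩
    | succ k ih =>
      intro n g hg hc hsupp
      have h₀mem := KK_mem hS hh_mem hh_supp uu_mem uu_supp hg
      set h₀ := KK act deg hh uu n g with hh₀
      set g₁ := g - TD dF act deg m (n+1) h₀ with hg₁def
      have hkey := key n g hg hc
      rw [← hh₀] at hkey
      have hg₁ : g₁ = - fun e'' => ∑ a, act (g a) (tt deg d m hh uu a e'') := by
        rw [hg₁def]
        nth_rewrite 1 [hkey]
        funext e''
        simp only [Pi.sub_apply, Pi.neg_apply]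
        abel
      have hg₁mem : ∀ e, g₁ e ∈ ℱ (n - deg e) := fun e =>
        sub_mem (hg e) (mem_cast (TD_mem hS hT h₀mem e) (by omega))
      have hg₁cyc : TD dF act deg m n g₁ = 0 := by
        have hsq := TD_sq hS hT h₀mem
        rw [show n+1-1 = n from by ring] at hsq
        rw [hg₁def, TD_sub, hc, hsq, sub_zero]
      have hg₁supp : ∀ e, (k:ℤ) ≤ deg e → g₁ e = 0 := by
        intro e hk
        rw [hg₁, Pi.neg_apply, neg_eq_zero]
        refine Finset.sum_eq_zero fun a _ => ?_
        by_cases hlt : deg e < deg a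
        · rw [hsupp a (by push_cast; omega), map_zero, LinearMap.zero_apply]
        · rw [tt_strict hT hh_supp uu_supp a e hlt, map_zero]
      obtain ⟨h₁, h₁mem, h₁eq⟩ := ih n g₁ hg₁mem hg₁cyc hg₁supp
      refine ⟨h₀ + h₁, fun e => add_mem (h₀mem e) (h₁mem e), ?_⟩
      rw [TD_add, ← h₁eq, hg₁def]
      abel
  intro n g hg hc
  refine main (Finset.univ.sup (fun e => (deg e).toNat) + 1) n g hg hc
    fun e hk => absurd hk (by
      have h1 : (deg e).toNat ≤ Finset.univ.sup (fun e => (deg e).toNat) :=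
        Finset.le_sup (f := fun e => (deg e).toNat) (Finset.mem_univ e)
      have h2 : deg e ≤ ((deg e).toNat : ℤ) := Int.self_le_toNat _
      push_cast
      omega)
end Exact
end Generic3
end Statement9Aux


namespace Statement9Aux
section HHomotopy
variable {H : Type*} [Ring H] {ι : Type*} [Fintype ι] [DecidableEq ι]

/-- The differential of the lifted complex: right multiplication by the
adjacent-degree entries of `M`. -/
def dH (deg : ι → ℤ) (M : ι → ι → H) (f : ι → H) : ι → H :=
  fun e => ∑ e', f e' * (if deg e' = deg e + 1 then M e' e else 0)

variable {deg : ι → ℤ} {M : ι → ι → H}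

lemma homotopy_exists (hdeg0 : ∀ e, 0 ≤ deg e)
    (hC2 : ∀ e e₂, ∑ e₁, (if deg e = deg e₁ + 1 then M e e₁ else 0) *
      (if deg e₁ = deg e₂ + 1 then M e₁ e₂ else 0) = 0)
    (hEX : ∀ (n : ℤ) (f : ι → H), (∀ e, deg e ≠ n → f e = 0) →
      dH deg M f = 0 →
      ∃ g : ι → H, (∀ e, deg e ≠ n + 1 → g e = 0) ∧ f = dH deg M g) :
    ∃ h : ι → ι → H, (∀ e e', deg e' ≠ deg e + 1 → h e e' = 0) ∧
      ∀ e e'', dH deg M (h e) e''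
        + ∑ e₁, (if deg e = deg e₁ + 1 then M e e₁ else 0) * h e₁ e''
        = if e'' = e then 1 else 0 := by
  have main : ∀ k : ℕ, ∃ h : ι → ι → H,
      (∀ e e', deg e' ≠ deg e + 1 → h e e' = 0) ∧
      ∀ e, (deg e).toNat < k → ∀ e'', dH deg M (h e) e''
        + ∑ e₁, (if deg e = deg e₁ + 1 then M e e₁ else 0) * h e₁ e''
        = if e'' = e then 1 else 0 := by
    intro k
    induction k with
    | zero =>
      exact ⟨0, fun _ _ _ => rfl, fun e he => absurd he (Nat.not_lt_zero _)⟩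
    | succ k ih =>
      obtain ⟨h, hsupp, hid⟩ := ih
      set ρ : ι → ι → H := fun e e₂ => (if e₂ = e then 1 else 0)
        - ∑ e₁, (if deg e = deg e₁ + 1 then M e e₁ else 0) * h e₁ e₂ with hρ
      have hch : ∀ e : ι, deg e = (k:ℤ) → ∃ g : ι → H,
          (∀ e', deg e' ≠ deg e + 1 → g e' = 0) ∧ ρ e = dH deg M g := by
        intro e he
        refine hEX (deg e) (ρ e) ?_ ?_
        · intro e₂ hne
          simp only [hρ]
          rw [if_neg (fun h' : e₂ = e => hne (by rw [h'])), zero_sub, neg_eq_zero]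
          refine Finset.sum_eq_zero fun e₁ _ => ?_
          by_cases hg : deg e = deg e₁ + 1
          · rw [hsupp e₁ e₂ (by omega), mul_zero]
          · rw [if_neg hg, zero_mul]
        · funext e''
          show ∑ e₂, ρ e e₂ * (if deg e₂ = deg e'' + 1 then M e₂ e'' else 0) = 0
          simp only [hρ, sub_mul, Finset.sum_sub_distrib, Finset.sum_mul]
          have hfst : ∑ e₂, (if e₂ = e then (1:H) else 0) *
              (if deg e₂ = deg e'' + 1 then M e₂ e'' else 0)
              = if deg e = deg e'' + 1 then M e e'' else 0 := by
            rw [Finset.sum_eq_single e]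
            · rw [if_pos rfl, one_mul]
            · intro e₂ _ hne; rw [if_neg hne, zero_mul]
            · intro hmem; exact absurd (Finset.mem_univ e) hmem
          rw [hfst]
          simp only [mul_assoc]
          rw [Finset.sum_comm]
          have hterm : ∀ e₁ : ι, ∑ e₂, (if deg e = deg e₁ + 1 then M e e₁ else 0)
              * (h e₁ e₂ * (if deg e₂ = deg e'' + 1 then M e₂ e'' else 0))
              = (if deg e = deg e₁ + 1 then M e e₁ else 0) * (if e'' = e₁ then 1 else 0)
                - ∑ e₂, (if deg e = deg e₁ + 1 then M e e₁ else 0)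
                    * ((if deg e₁ = deg e₂ + 1 then M e₁ e₂ else 0) * h e₂ e'') := by
            intro e₁
            by_cases hg : deg e = deg e₁ + 1
            · have hlt : (deg e₁).toNat < k := by
                have := hdeg0 e₁; have := hdeg0 e; omega
              have := hid e₁ hlt e''
              rw [← Finset.mul_sum]
              have hdHval : dH deg M (h e₁) e'' = (if e'' = e₁ then 1 else 0)
                  - ∑ e₂, (if deg e₁ = deg e₂ + 1 then M e₁ e₂ else 0) * h e₂ e'' := by
                rw [eq_sub_iff_add_eq]; exact this
              rw [show (∑ e₂, h e₁ e₂ * (if deg e₂ = deg e'' + 1 then M e₂ e'' else 0))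
                  = dH deg M (h e₁) e'' from rfl, hdHval, mul_sub, Finset.mul_sum]
            · simp [if_neg hg]
          simp only [hterm]
          rw [Finset.sum_sub_distrib]
          have hdiag : ∑ e₁, (if deg e = deg e₁ + 1 then M e e₁ else 0)
              * (if e'' = e₁ then (1:H) else 0) = if deg e = deg e'' + 1 then M e e'' else 0 := by
            rw [Finset.sum_eq_single e'']
            · rw [if_pos rfl, mul_one]
            · intro e₁ _ hne; rw [if_neg (fun h' : e'' = e₁ => hne h'.symm), mul_zero]
            · intro hmem; exact absurd (Finset.mem_univ e'') hmem
          rw [hdiag, Finset.sum_comm]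
          have hzero : ∑ e₂, ∑ e₁, (if deg e = deg e₁ + 1 then M e e₁ else 0)
              * ((if deg e₁ = deg e₂ + 1 then M e₁ e₂ else 0) * h e₂ e'') = 0 := by
            refine Finset.sum_eq_zero fun e₂ _ => ?_
            rw [show (∑ e₁, (if deg e = deg e₁ + 1 then M e e₁ else 0)
                * ((if deg e₁ = deg e₂ + 1 then M e₁ e₂ else 0) * h e₂ e''))
              = (∑ e₁, (if deg e = deg e₁ + 1 then M e e₁ else 0)
                * (if deg e₁ = deg e₂ + 1 then M e₁ e₂ else 0)) * h e₂ e'' from by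
                rw [Finset.sum_mul]
                exact Finset.sum_congr rfl fun e₁ _ => (mul_assoc _ _ _).symm,
              hC2, zero_mul]
          rw [hzero]
          abel
      set h' : ι → ι → H := fun e => if hdeg : deg e = (k:ℤ)
        then Classical.choose (hch e hdeg) else h e with hh'
      have hh'supp : ∀ e e', deg e' ≠ deg e + 1 → h' e e' = 0 := by
        intro e e' hne
        rw [hh']
        by_cases hdeg : deg e = (k:ℤ)
        · simp only [dif_pos hdeg]
          exact (Classical.choose_spec (hch e hdeg)).1 e' hne
        · simp only [dif_neg hdeg]
          exact hsupp e e' hne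
      refine ⟨h', hh'supp, ?_⟩
      intro e he e''
      have hGsum : (∑ e₁, (if deg e = deg e₁ + 1 then M e e₁ else 0) * h' e₁ e'')
          = ∑ e₁, (if deg e = deg e₁ + 1 then M e e₁ else 0) * h e₁ e'' := by
        refine Finset.sum_congr rfl fun e₁ _ => ?_
        by_cases hg : deg e = deg e₁ + 1
        · congr 1
          rw [hh']
          have : deg e₁ ≠ (k:ℤ) → h' e₁ = h e₁ := fun hne => by
            rw [hh']; simp [dif_neg hne]
          by_cases hdeg : deg e₁ = (k:ℤ)
          · -- only problematic if deg e₁ = k; but deg e ≤ k and deg e = deg e₁+1 > k: contra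
            exfalso
            have := hdeg0 e
            have := hdeg0 e₁
            omega
          · simp [dif_neg hdeg]
        · rw [if_neg hg, zero_mul, zero_mul]
      by_cases hdeg : deg e = (k:ℤ)
      · have hspec := Classical.choose_spec (hch e hdeg)
        have hrow : h' e = Classical.choose (hch e hdeg) := by
          rw [hh']; simp [dif_pos hdeg]
        rw [hGsum, hrow]
        have : dH deg M (Classical.choose (hch e hdeg)) e'' = ρ e e'' := by
          rw [← hspec.2]
        rw [this]
        simp only [hρ]
        abel
      · have hlt : (deg e).toNat < k := by have := hdeg0 e; omega
        have hrow : h' e = h e := by rw [hh']; simp [dif_neg hdeg]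
        rw [hGsum, hrow]
        exact hid e hlt e''
  obtain ⟨h, hsupp, hid⟩ := main (Finset.univ.sup (fun e => (deg e).toNat) + 1)
  exact ⟨h, hsupp, fun e e'' => hid e (Nat.lt_succ_of_le
    (Finset.le_sup (f := fun e => (deg e).toNat) (Finset.mem_univ e))) e''⟩
end HHomotopy
end Statement9Aux


namespace Statement9Aux
section Cone
variable {A : Type*} [CommRing A] {R : Type*} [Ring R] [Algebra A R]
  {B : Type*} [Fintype B] [DecidableEq B] {B' : Type*} [Fintype B'] [DecidableEq B']

/-- Degree function of the cone basis. -/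
def coneDeg (degB : B → ℤ) (degB' : B' → ℤ) : B ⊕ B' → ℤ :=
  Sum.elim (fun x => degB x + 1) degB'

/-- Twisting matrix of the cone of a continuation cocycle. -/
def coneM (degB : B → ℤ) (mC : B → B → R) (mD : B' → B' → R) (ν : B → B' → R) :
    B ⊕ B' → B ⊕ B' → R := fun e e' =>
  match e, e' with
  | Sum.inl x, Sum.inl x' => mC x x'
  | Sum.inl x, Sum.inr y => ((degB x).negOnePow : ℤ) • ν x y
  | Sum.inr _, Sum.inl _ => 0
  | Sum.inr y, Sum.inr y' => mD y y'

variable {ℛ : ℤ → Submodule A R} {d : R →ₗ[A] R}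
  {degB : B → ℤ} {degB' : B' → ℤ} {mC : B → B → R} {mD : B' → B' → R}
  {ν : B → B' → R}

lemma cone_twist
    (hRneg : ∀ i : ℤ, i < 0 → ℛ i = ⊥)
    (hmC_mem : ∀ x y : B, mC x y ∈ ℛ (degB x - degB y - 1))
    (hmC_zero : ∀ x y : B, ¬ degB y < degB x → mC x y = 0)
    (hmC_mc : ∀ x y : B, d (mC x y) =
      ∑ z : B, (Int.negOnePow (degB x - degB z) : ℤ) • (mC x z * mC z y))
    (hmD_mem : ∀ w y : B', mD w y ∈ ℛ (degB' w - degB' y - 1))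
    (hmD_zero : ∀ w y : B', ¬ degB' y < degB' w → mD w y = 0)
    (hmD_mc : ∀ w y : B', d (mD w y) =
      ∑ u : B', (Int.negOnePow (degB' w - degB' u) : ℤ) • (mD w u * mD u y))
    (hν_mem : ∀ (x : B) (y : B'), ν x y ∈ ℛ (degB x - degB' y))
    (hν_eq : ∀ (x : B) (y : B'), d (ν x y) =
      (∑ z : B, mC x z * ν z y) -
        ∑ w : B', (Int.negOnePow (degB x - degB' w) : ℤ) • (ν x w * mD w y)) :
    Twist ℛ d (coneDeg degB degB') (coneM degB mC mD ν) := by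
  have hRz : ∀ {i : ℤ} {a : R}, a ∈ ℛ i → i < 0 → a = 0 := by
    intro i a ha hi
    have : a ∈ (⊥ : Submodule A R) := by rw [← hRneg i hi]; exact ha
    simpa using this
  constructor
  · rintro (x | y) (x' | y')
    · exact mem_cast (hmC_mem x x') (by simp only [coneDeg, Sum.elim_inl, Sum.elim_inr]; try omega)
    · exact Submodule.smul_of_tower_mem _ _
        (mem_cast (hν_mem x y') (by simp only [coneDeg, Sum.elim_inl, Sum.elim_inr]; try omega))
    · exact Submodule.zero_mem _
    · exact mem_cast (hmD_mem y y') (by simp only [coneDeg, Sum.elim_inl, Sum.elim_inr]; try omega)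
  · rintro (x | y) (x' | y') h
    · exact hmC_zero x x' (by simp only [coneDeg, Sum.elim_inl, Sum.elim_inr] at h; omega)
    · show ((degB x).negOnePow : ℤ) • ν x y' = 0
      rw [hRz (hν_mem x y') (by simp only [coneDeg, Sum.elim_inl, Sum.elim_inr] at h; omega), smul_zero]
    · rfl
    · exact hmD_zero y y' (by simp only [coneDeg, Sum.elim_inl, Sum.elim_inr] at h; omega)
  · rintro (x | y) (x' | y') <;>
      rw [Fintype.sum_sum_type]
    · -- inl/inl
      show d (mC x x') = _
      rw [hmC_mc]
      have h2 : ∀ w : B', (Int.negOnePow (coneDeg degB degB' (Sum.inl x)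
          - coneDeg degB degB' (Sum.inr w)) : ℤ) •
          (coneM degB mC mD ν (Sum.inl x) (Sum.inr w)
            * coneM degB mC mD ν (Sum.inr w) (Sum.inl x')) = 0 := by
        intro w
        show _ • (_ * (0:R)) = 0
        rw [mul_zero, smul_zero]
      rw [Finset.sum_eq_zero fun w _ => h2 w, add_zero]
      refine Finset.sum_congr rfl fun z _ => ?_
      show _ • (mC x z * mC z x') = _ • (mC x z * mC z x')
      rw [npow_congr (a := coneDeg degB degB' (Sum.inl x)
        - coneDeg degB degB' (Sum.inl z)) (b := degB x - degB z)
        (by simp only [coneDeg, Sum.elim_inl]; omega)]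
    · -- inl/inr
      show d (((degB x).negOnePow : ℤ) • ν x y') = _
      rw [map_zsmul, hν_eq, smul_sub, Finset.smul_sum, Finset.smul_sum,
        sub_eq_add_neg, ← Finset.sum_neg_distrib]
      congr 1
      · refine Finset.sum_congr rfl fun z _ => ?_
        show ((degB x).negOnePow : ℤ) • (mC x z * ν z y')
            = _ • (mC x z * (((degB z).negOnePow : ℤ) • ν z y'))
        rw [mul_smul_comm, ← mul_smul, npowZ_mul,
          npow_congr (a := coneDeg degB degB' (Sum.inl x)
            - coneDeg degB degB' (Sum.inl z) + degB z) (b := degB x)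
            (by simp only [coneDeg, Sum.elim_inl]; omega)]
      · refine Finset.sum_congr rfl fun w _ => ?_
        show -(((degB x).negOnePow : ℤ) • ((degB x - degB' w).negOnePow : ℤ)
            • (ν x w * mD w y'))
            = _ • ((((degB x).negOnePow : ℤ) • ν x w) * mD w y')
        rw [smul_mul_assoc, ← mul_smul, ← mul_smul, ← neg_smul, npowZ_mul, npowZ_mul,
          npow_anti (a := coneDeg degB degB' (Sum.inl x)
              - coneDeg degB degB' (Sum.inr w) + degB x)
            (b := degB x + (degB x - degB' w))
            (by simp only [coneDeg, Sum.elim_inl, Sum.elim_inr]; omega)]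
    · -- inr/inl
      show d (0:R) = _
      rw [map_zero]
      have h1 : ∀ z : B, (Int.negOnePow (coneDeg degB degB' (Sum.inr y)
          - coneDeg degB degB' (Sum.inl z)) : ℤ) •
          (coneM degB mC mD ν (Sum.inr y) (Sum.inl z)
            * coneM degB mC mD ν (Sum.inl z) (Sum.inl x')) = 0 := by
        intro z
        show _ • ((0:R) * _) = 0
        rw [zero_mul, smul_zero]
      have h2 : ∀ w : B', (Int.negOnePow (coneDeg degB degB' (Sum.inr y)
          - coneDeg degB degB' (Sum.inr w)) : ℤ) •
          (coneM degB mC mD ν (Sum.inr y) (Sum.inr w)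
            * coneM degB mC mD ν (Sum.inr w) (Sum.inl x')) = 0 := by
        intro w
        show _ • (_ * (0:R)) = 0
        rw [mul_zero, smul_zero]
      rw [Finset.sum_eq_zero fun z _ => h1 z, Finset.sum_eq_zero fun w _ => h2 w,
        add_zero]
    · -- inr/inr
      show d (mD y y') = _
      have h1 : ∀ z : B, (Int.negOnePow (coneDeg degB degB' (Sum.inr y)
          - coneDeg degB degB' (Sum.inl z)) : ℤ) •
          (coneM degB mC mD ν (Sum.inr y) (Sum.inl z)
            * coneM degB mC mD ν (Sum.inl z) (Sum.inr y')) = 0 := by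
        intro z
        show _ • ((0:R) * _) = 0
        rw [zero_mul, smul_zero]
      rw [Finset.sum_eq_zero fun z _ => h1 z, zero_add, hmD_mc]
      refine Finset.sum_congr rfl fun w _ => ?_
      show _ • (mD y w * mD w y') = _ • (mD y w * mD w y')
      rw [npow_congr (a := coneDeg degB degB' (Sum.inr y)
        - coneDeg degB degB' (Sum.inr w)) (b := degB' y - degB' w)
        (by simp only [coneDeg, Sum.elim_inr]; try omega)]
  end Cone
end Statement9Aux


namespace Statement9Aux
section ClsC2
variable {A : Type*} [CommRing A] {R : Type*} [Ring R] [Algebra A R]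
  {H : Type*} [Ring H] {ι : Type*} [Fintype ι] [DecidableEq ι]
  {ℛ : ℤ → Submodule A R} {d : R →ₗ[A] R} {deg : ι → ℤ} {m : ι → ι → R}
  {cls : R →+ H}

lemma cls_C2 (hT : Twist ℛ d deg m)
    (hd_mem : ∀ i : ℤ, ∀ a ∈ ℛ i, d a ∈ ℛ (i - 1))
    (hcls_mul : ∀ a ∈ ℛ 0, ∀ b ∈ ℛ 0, cls (a * b) = cls a * cls b)
    (hcls_ker : ∀ a ∈ ℛ 0, (cls a = 0 ↔ ∃ u ∈ ℛ 1, a = d u)) :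
    ∀ e e₂ : ι, ∑ e₁, (if deg e = deg e₁ + 1 then cls (m e e₁) else 0) *
      (if deg e₁ = deg e₂ + 1 then cls (m e₁ e₂) else 0) = 0 := by
  intro e e₂
  by_cases h2 : deg e = deg e₂ + 2
  · have h0 : cls (d (m e e₂)) = 0 :=
      (hcls_ker _ (mem_cast (hd_mem _ _ (hT.mem e e₂)) (by omega))).mpr
        ⟨m e e₂, mem_cast (hT.mem e e₂) (by omega), rfl⟩
    rw [hT.mc, map_sum] at h0
    have hterm : ∀ e₁ : ι, cls (((deg e - deg e₁).negOnePow : ℤ) • (m e e₁ * m e₁ e₂))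
        = -((if deg e = deg e₁ + 1 then cls (m e e₁) else 0) *
            (if deg e₁ = deg e₂ + 1 then cls (m e₁ e₂) else 0)) := by
      intro e₁
      rw [map_zsmul]
      by_cases ha : deg e = deg e₁ + 1
      · rw [if_pos ha, if_pos (by omega),
          hcls_mul _ (mem_cast (hT.mem e e₁) (by omega)) _
            (mem_cast (hT.mem e₁ e₂) (by omega)),
          npow_congr (a := deg e - deg e₁) (b := 1) (by omega),
          Int.negOnePow_one]
        show ((-1 : ℤˣ) : ℤ) • _ = _
        rw [Units.val_neg, Units.val_one, neg_one_smul]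
      · rw [if_neg ha, zero_mul, neg_zero]
        by_cases hlt : deg e₁ < deg e
        · rw [hT.strict e₁ e₂ (by omega), mul_zero, map_zero, smul_zero]
        · rw [hT.strict e e₁ hlt, zero_mul, map_zero, smul_zero]
    rw [Finset.sum_congr rfl fun e₁ _ => hterm e₁, Finset.sum_neg_distrib,
      neg_eq_zero] at h0
    exact h0
  · refine Finset.sum_eq_zero fun e₁ _ => ?_
    by_cases ha : deg e = deg e₁ + 1
    · rw [if_neg (fun hb : deg e₁ = deg e₂ + 1 => h2 (by omega)), mul_zero]
    · rw [if_neg ha, zero_mul]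
end ClsC2
end Statement9Aux


open Statement9Aux

/-- Let `R` (nonnegatively graded DGA) act on a nonnegatively graded DG module `F`,
let `mC`, `mD` be twisting cocycles, `ν` a continuation cocycle with induced chain map `ΨF`
between the twisted complexes, and let `cls : R → H` realize `H₀(R) = R₀/∂(R₁)`. The map `Ψ̃`
between the lifted complexes (free left `H`-modules on the bases, with the differentials given by
the classes of the `m`'s in adjacent degrees) defined by the classes `n x y` of the `ν x y` in
equal degrees is an `H`-linear chain map, and if `Ψ̃` is a quasi-isomorphism then `ΨF` is a
quasi-isomorphism. -/
theorem statement9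
    {A : Type*} [CommRing A] {R : Type*} [Ring R] [Algebra A R]
    (ℛ : ℤ → Submodule A R) [GradedRing ℛ]
    (hRneg : ∀ i : ℤ, i < 0 → ℛ i = ⊥)
    (d : R →ₗ[A] R)
    (hd_mem : ∀ i : ℤ, ∀ a ∈ ℛ i, d a ∈ ℛ (i - 1))
    (hd_sq : ∀ a : R, d (d a) = 0)
    (hd_leibniz : ∀ i : ℤ, ∀ a ∈ ℛ i, ∀ b : R,
      d (a * b) = d a * b + (Int.negOnePow i : ℤ) • (a * d b))
    {F : Type*} [AddCommGroup F] [Module A F]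
    (ℱ : ℤ → Submodule A F) [DirectSum.Decomposition ℱ]
    (hFneg : ∀ i : ℤ, i < 0 → ℱ i = ⊥)
    (dF : F →ₗ[A] F)
    (hdF_mem : ∀ i : ℤ, ∀ f ∈ ℱ i, dF f ∈ ℱ (i - 1))
    (hdF_sq : ∀ f : F, dF (dF f) = 0)
    (act : F →ₗ[A] R →ₗ[A] F)
    (hact_one : ∀ f : F, act f 1 = f)
    (hact_mul : ∀ (f : F) (a b : R), act (act f a) b = act f (a * b))
    (hact_mem : ∀ (i j : ℤ), ∀ f ∈ ℱ i, ∀ a ∈ ℛ j, act f a ∈ ℱ (i + j))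
    (hact_leibniz : ∀ i : ℤ, ∀ f ∈ ℱ i, ∀ a : R,
      dF (act f a) = act (dF f) a + (Int.negOnePow i : ℤ) • act f (d a))
    {B : Type*} [Fintype B] [DecidableEq B]
    (degB : B → ℤ) (hdegB : ∀ x : B, 0 ≤ degB x)
    {B' : Type*} [Fintype B'] [DecidableEq B']
    (degB' : B' → ℤ) (hdegB' : ∀ y : B', 0 ≤ degB' y)
    (mC : B → B → R)
    (hmC_mem : ∀ x y : B, mC x y ∈ ℛ (degB x - degB y - 1))
    (hmC_zero : ∀ x y : B, ¬ degB y < degB x → mC x y = 0)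
    (hmC_mc : ∀ x y : B, d (mC x y) =
      ∑ z : B, (Int.negOnePow (degB x - degB z) : ℤ) • (mC x z * mC z y))
    (mD : B' → B' → R)
    (hmD_mem : ∀ w y : B', mD w y ∈ ℛ (degB' w - degB' y - 1))
    (hmD_zero : ∀ w y : B', ¬ degB' y < degB' w → mD w y = 0)
    (hmD_mc : ∀ w y : B', d (mD w y) =
      ∑ u : B', (Int.negOnePow (degB' w - degB' u) : ℤ) • (mD w u * mD u y))
    (ν : B → B' → R)
    (hν_mem : ∀ (x : B) (y : B'), ν x y ∈ ℛ (degB x - degB' y))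
    (hν_eq : ∀ (x : B) (y : B'), d (ν x y) =
      (∑ z : B, mC x z * ν z y) -
        ∑ w : B', (Int.negOnePow (degB x - degB' w) : ℤ) • (ν x w * mD w y))
    (DC : (B → F) →ₗ[A] (B → F))
    (hDC : ∀ i : ℤ, ∀ f ∈ ℱ i, ∀ x : B,
      DC (Pi.single x f) = Pi.single x (dF f) +
        (Int.negOnePow i : ℤ) • (fun z : B => act f (mC x z)))
    (DD : (B' → F) →ₗ[A] (B' → F))
    (hDD : ∀ i : ℤ, ∀ f ∈ ℱ i, ∀ w : B',
      DD (Pi.single w f) = Pi.single w (dF f) +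
        (Int.negOnePow i : ℤ) • (fun y : B' => act f (mD w y)))
    (ΨF : (B → F) →ₗ[A] (B' → F))
    (hΨF : ∀ (f : F) (x : B), ΨF (Pi.single x f) = fun y : B' => act f (ν x y))
    {H : Type*} [Ring H] (cls : R →+ H)
    (hcls_gr : ∀ i : ℤ, i ≠ 0 → ∀ a ∈ ℛ i, cls a = 0)
    (hcls_one : cls 1 = 1)
    (hcls_mul : ∀ a ∈ ℛ 0, ∀ b ∈ ℛ 0, cls (a * b) = cls a * cls b)
    (hcls_surj : ∀ t : H, ∃ a ∈ ℛ 0, cls a = t)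
    (hcls_ker : ∀ a ∈ ℛ 0, (cls a = 0 ↔ ∃ u ∈ ℛ 1, a = d u)) :
    ((∀ (t : H) (f : B → H) (y : B'),
        (∑ x : B, (t * f x) * (if degB x = degB' y then cls (ν x y) else 0)) =
          t * ∑ x : B, f x * (if degB x = degB' y then cls (ν x y) else 0)) ∧
      (∀ (f : B → H) (y : B'),
        (∑ w : B', (∑ x : B, f x * (if degB x = degB' w then cls (ν x w) else 0)) *
            (if degB' w = degB' y + 1 then cls (mD w y) else 0)) =
          ∑ z : B, (∑ x : B, f x * (if degB x = degB z + 1 then cls (mC x z) else 0)) *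
            (if degB z = degB' y then cls (ν z y) else 0))) ∧
    (GradedQuasiIso (fun n => {f : B → H | ∀ x : B, degB x ≠ n → f x = 0})
        (fun n => {f : B' → H | ∀ y : B', degB' y ≠ n → f y = 0})
        (fun f z => ∑ x : B, f x * (if degB x = degB z + 1 then cls (mC x z) else 0))
        (fun f y => ∑ w : B', f w * (if degB' w = degB' y + 1 then cls (mD w y) else 0))
        (fun f y => ∑ x : B, f x * (if degB x = degB' y then cls (ν x y) else 0)) →
      GradedQuasiIso (fun n => {c : B → F | ∀ x : B, c x ∈ ℱ (n - degB x)})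
        (fun n => {c : B' → F | ∀ y : B', c y ∈ ℱ (n - degB' y)})
        (⇑DC) (⇑DD) (⇑ΨF)) := by
  -- elements of negative-degree graded pieces vanish
  have hRz : ∀ {i : ℤ} {a : R}, a ∈ ℛ i → i < 0 → a = 0 := by
    intro i a ha hi
    have : a ∈ (⊥ : Submodule A R) := by rw [← hRneg i hi]; exact ha
    simpa using this
  -- key per-entry identity for the chain-map property over H
  have key1 : ∀ (x : B) (y : B'),
      (∑ w : B', (if degB x = degB' w then cls (ν x w) else 0) *
        (if degB' w = degB' y + 1 then cls (mD w y) else 0)) =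
      ∑ z : B, (if degB x = degB z + 1 then cls (mC x z) else 0) *
        (if degB z = degB' y then cls (ν z y) else 0) := by
    intro x y
    by_cases hxy : degB x = degB' y + 1
    · have hmem0 : d (ν x y) ∈ ℛ 0 :=
        mem_cast (hd_mem _ _ (hν_mem x y)) (by omega)
      have hcls0 : cls (d (ν x y)) = 0 :=
        (hcls_ker _ hmem0).mpr ⟨ν x y, mem_cast (hν_mem x y) (by omega), rfl⟩
      rw [hν_eq, map_sub, map_sum, map_sum, sub_eq_zero] at hcls0
      have hL : ∀ w : B', cls ((Int.negOnePow (degB x - degB' w) : ℤ) • (ν x w * mD w y))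
          = (if degB x = degB' w then cls (ν x w) else 0) *
            (if degB' w = degB' y + 1 then cls (mD w y) else 0) := by
        intro w
        rw [map_zsmul]
        by_cases h : degB x = degB' w
        · rw [if_pos h, if_pos (by omega),
            hcls_mul _ (mem_cast (hν_mem x w) (by omega)) _
              (mem_cast (hmD_mem w y) (by omega)),
            npow_congr (a := degB x - degB' w) (b := 0) (by omega),
            Int.negOnePow_zero, Units.val_one, one_smul]
        · rw [if_neg h, zero_mul]
          rcases lt_or_gt_of_ne h with hlt | hgt
          · rw [hRz (hν_mem x w) (by omega), zero_mul, map_zero, smul_zero]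
          · rw [hmD_zero w y (by omega), mul_zero, map_zero, smul_zero]
      have hR : ∀ z : B, cls (mC x z * ν z y)
          = (if degB x = degB z + 1 then cls (mC x z) else 0) *
            (if degB z = degB' y then cls (ν z y) else 0) := by
        intro z
        by_cases h : degB z = degB' y
        · rw [if_pos h, if_pos (by omega),
            hcls_mul _ (mem_cast (hmC_mem x z) (by omega)) _
              (mem_cast (hν_mem z y) (by omega))]
        · rw [if_neg h, mul_zero]
          rcases lt_or_gt_of_ne h with hlt | hgt
          · rw [hRz (hν_mem z y) (by omega), mul_zero, map_zero]
          · rw [hmC_zero x z (by omega), zero_mul, map_zero]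
      calc (∑ w : B', (if degB x = degB' w then cls (ν x w) else 0) *
            (if degB' w = degB' y + 1 then cls (mD w y) else 0))
          = ∑ w : B', cls ((Int.negOnePow (degB x - degB' w) : ℤ) • (ν x w * mD w y)) :=
            (Finset.sum_congr rfl fun w _ => (hL w).symm)
        _ = ∑ z : B, cls (mC x z * ν z y) := hcls0.symm
        _ = _ := Finset.sum_congr rfl fun z _ => hR z
    · rw [Finset.sum_eq_zero, Finset.sum_eq_zero]
      · intro z _
        by_cases h : degB x = degB z + 1
        · rw [if_neg (fun h2 : degB z = degB' y => hxy (by omega)), mul_zero]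
        · rw [if_neg h, zero_mul]
      · intro w _
        by_cases h : degB x = degB' w
        · rw [if_neg (fun h2 : degB' w = degB' y + 1 => hxy (by omega)), mul_zero]
        · rw [if_neg h, zero_mul]
  have hchain : ∀ (f : B → H) (y : B'),
      (∑ w : B', (∑ x : B, f x * (if degB x = degB' w then cls (ν x w) else 0)) *
          (if degB' w = degB' y + 1 then cls (mD w y) else 0)) =
        ∑ z : B, (∑ x : B, f x * (if degB x = degB z + 1 then cls (mC x z) else 0)) *
          (if degB z = degB' y then cls (ν z y) else 0) := by
    intro f y
    have hside : ∀ (ι' : Type) (_ : Fintype ι'), True := fun _ _ => trivial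
    calc (∑ w : B', (∑ x : B, f x * (if degB x = degB' w then cls (ν x w) else 0)) *
          (if degB' w = degB' y + 1 then cls (mD w y) else 0))
        = ∑ x : B, f x * ∑ w : B', (if degB x = degB' w then cls (ν x w) else 0) *
            (if degB' w = degB' y + 1 then cls (mD w y) else 0) := by
          simp only [Finset.sum_mul, mul_assoc]
          rw [Finset.sum_comm]
          exact Finset.sum_congr rfl fun x _ => (Finset.mul_sum _ _ _).symm
      _ = ∑ x : B, f x * ∑ z : B, (if degB x = degB z + 1 then cls (mC x z) else 0) *
            (if degB z = degB' y then cls (ν z y) else 0) :=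
          Finset.sum_congr rfl fun x _ => by rw [key1 x y]
      _ = _ := by
          simp only [Finset.mul_sum]
          rw [Finset.sum_comm]
          refine Finset.sum_congr rfl fun z _ => ?_
          rw [Finset.sum_mul]
          exact Finset.sum_congr rfl fun x _ => (mul_assoc _ _ _).symm
  refine ⟨⟨fun t f y => ?_, hchain⟩, fun hQI => ?_⟩
  · rw [Finset.mul_sum]
    exact Finset.sum_congr rfl fun x _ => mul_assoc _ _ _
  · -- ====== PART 2 ======
    have hSetup : Setup ℛ ℱ d dF act :=
      ⟨fun hi hj => SetLike.mul_mem_graded hi hj, hd_mem, hdF_mem, hdF_sq,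
        hact_one, hact_mul, hact_mem, hact_leibniz⟩
    have hTE : Twist ℛ d (coneDeg degB degB') (coneM degB mC mD ν) :=
      cone_twist hRneg hmC_mem hmC_zero hmC_mc hmD_mem hmD_zero hmD_mc hν_mem hν_eq
    have hdegE0 : ∀ e : B ⊕ B', 0 ≤ coneDeg degB degB' e := by
      rintro (x | y) <;> simp only [coneDeg, Sum.elim_inl, Sum.elim_inr]
      · have := hdegB x; omega
      · exact hdegB' y
    have hC2 := cls_C2 (cls := cls) hTE hd_mem hcls_mul hcls_ker
    -- formulas for the lifted cone differential
    have hdHinl : ∀ (ff : B ⊕ B' → H) (zb : B),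
        dH (coneDeg degB degB') (fun e e' => cls (coneM degB mC mD ν e e')) ff (Sum.inl zb)
        = ∑ x, ff (Sum.inl x) * (if degB x = degB zb + 1 then cls (mC x zb) else 0) := by
      intro ff zb
      show (∑ e', ff e' * (if coneDeg degB degB' e' = coneDeg degB degB' (Sum.inl zb) + 1
        then cls (coneM degB mC mD ν e' (Sum.inl zb)) else 0)) = _
      rw [Fintype.sum_sum_type]
      have h2 : ∀ w : B', ff (Sum.inr w) *
          (if coneDeg degB degB' (Sum.inr w) = coneDeg degB degB' (Sum.inl zb) + 1
            then cls (coneM degB mC mD ν (Sum.inr w) (Sum.inl zb)) else 0) = 0 := by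
        intro w
        rw [show coneM degB mC mD ν (Sum.inr w) (Sum.inl zb) = 0 from rfl, map_zero,
          ite_self, mul_zero]
      rw [Finset.sum_eq_zero fun w _ => h2 w, add_zero]
      refine Finset.sum_congr rfl fun x _ => ?_
      congr 1
      exact if_congr (by simp only [coneDeg, Sum.elim_inl]; omega) rfl rfl
    have hdHinr : ∀ (ff : B ⊕ B' → H) (y : B'),
        dH (coneDeg degB degB') (fun e e' => cls (coneM degB mC mD ν e e')) ff (Sum.inr y)
        = (∑ x, ff (Sum.inl x) * (if degB x = degB' y
            then ((degB x).negOnePow : ℤ) • cls (ν x y) else 0))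
          + ∑ w, ff (Sum.inr w) * (if degB' w = degB' y + 1 then cls (mD w y) else 0) := by
      intro ff y
      show (∑ e', ff e' * (if coneDeg degB degB' e' = coneDeg degB degB' (Sum.inr y) + 1
        then cls (coneM degB mC mD ν e' (Sum.inr y)) else 0)) = _
      rw [Fintype.sum_sum_type]
      congr 1
      · refine Finset.sum_congr rfl fun x _ => ?_
        congr 1
        rw [show coneM degB mC mD ν (Sum.inl x) (Sum.inr y)
          = ((degB x).negOnePow : ℤ) • ν x y from rfl, map_zsmul]
        exact if_congr (by simp only [coneDeg, Sum.elim_inl, Sum.elim_inr]; omega) rfl rfl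
    -- the sign-extraction identity for the `ν`-block
    have hsign : ∀ (k : ℤ) (aa : B → H), (∀ x, degB x ≠ k → aa x = 0) → ∀ y : B',
        (∑ x, aa x * (if degB x = degB' y
          then ((degB x).negOnePow : ℤ) • cls (ν x y) else 0))
        = (k.negOnePow : ℤ) • ∑ x, aa x * (if degB x = degB' y then cls (ν x y) else 0) := by
      intro k aa hsupp y
      rw [Finset.smul_sum]
      refine Finset.sum_congr rfl fun x _ => ?_
      by_cases hx : degB x = degB' y
      · by_cases hz : aa x = 0
        · rw [hz, zero_mul, zero_mul, smul_zero]
        · have hdx : degB x = k := by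
            by_contra h
            exact hz (hsupp x h)
          rw [if_pos hx, if_pos hx, mul_smul_comm, hdx]
      · rw [if_neg hx, if_neg hx, mul_zero, smul_zero]
    -- vanishing of `Ψ̃ v` outside the degree of `v`
    have hpsi_supp : ∀ (k : ℤ) (vv : B → H), (∀ x, degB x ≠ k → vv x = 0) →
        ∀ y : B', degB' y ≠ k →
          (∑ x, vv x * (if degB x = degB' y then cls (ν x y) else 0)) = 0 := by
      intro k vv hsupp y hy
      refine Finset.sum_eq_zero fun x _ => ?_
      by_cases hx : degB x = degB' y
      · rw [hsupp x (by omega), zero_mul]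
      · rw [if_neg hx, mul_zero]
    -- additivity of the `Ψ̃`-type sums
    have hpsi_add : ∀ (k : ℤ) (vv uu' : B → H) (y : B'),
        (∑ x, (vv x + k • uu' x) * (if degB x = degB' y then cls (ν x y) else 0))
        = (∑ x, vv x * (if degB x = degB' y then cls (ν x y) else 0))
          + k • ∑ x, uu' x * (if degB x = degB' y then cls (ν x y) else 0) := by
      intro k vv uu' y
      rw [Finset.smul_sum, ← Finset.sum_add_distrib]
      exact Finset.sum_congr rfl fun x _ => by rw [add_mul, smul_mul_assoc]
    -- exactness of the lifted cone complex
    have hEXH : ∀ (nn : ℤ) (f : B ⊕ B' → H),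
        (∀ e, coneDeg degB degB' e ≠ nn → f e = 0) →
        dH (coneDeg degB degB') (fun e e' => cls (coneM degB mC mD ν e e')) f = 0 →
        ∃ g : B ⊕ B' → H, (∀ e, coneDeg degB degB' e ≠ nn + 1 → g e = 0) ∧
          f = dH (coneDeg degB degB') (fun e e' => cls (coneM degB mC mD ν e e')) g := by
      intro nn f hsupp hcyc
      have hasupp : ∀ x, degB x ≠ nn - 1 → f (Sum.inl x) = 0 := fun x hx =>
        hsupp (Sum.inl x) (by simp only [coneDeg, Sum.elim_inl]; omega)
      have hbsupp : ∀ y, degB' y ≠ nn → f (Sum.inr y) = 0 := fun y hy =>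
        hsupp (Sum.inr y) (by simp only [coneDeg, Sum.elim_inr]; omega)
      have hcycl : ∀ zb : B,
          ∑ x, f (Sum.inl x) * (if degB x = degB zb + 1 then cls (mC x zb) else 0) = 0 := by
        intro zb
        rw [← hdHinl f zb, hcyc]
        rfl
      have hcycr : ∀ y : B',
          (((nn-1).negOnePow : ℤ) • ∑ x, f (Sum.inl x) *
            (if degB x = degB' y then cls (ν x y) else 0))
          + ∑ w, f (Sum.inr w) * (if degB' w = degB' y + 1 then cls (mD w y) else 0)
          = 0 := by
        intro y
        rw [← hsign (nn-1) (fun x => f (Sum.inl x)) hasupp y, ← hdHinr f y, hcyc]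
        rfl
      -- step 1: kill the `B`-component using injectivity on homology
      obtain ⟨v, hvmem, hveq⟩ := (hQI (nn-1)).2 (fun x => f (Sum.inl x)) hasupp
        (funext fun zb => hcycl zb)
        ⟨(-(((nn-1).negOnePow : ℤ))) • (fun y => f (Sum.inr y)),
          fun y hy => by
            show (-(((nn-1).negOnePow : ℤ))) • f (Sum.inr y) = 0
            rw [hbsupp y (by omega), smul_zero],
          by
            funext y
            show (∑ x, f (Sum.inl x) * (if degB x = degB' y then cls (ν x y) else 0))
              = ∑ w, ((-(((nn-1).negOnePow : ℤ))) • f (Sum.inr w)) *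
                  (if degB' w = degB' y + 1 then cls (mD w y) else 0)
            have h1 : ∀ w : B', ((-(((nn-1).negOnePow : ℤ))) • f (Sum.inr w)) *
                (if degB' w = degB' y + 1 then cls (mD w y) else 0)
                = (-(((nn-1).negOnePow : ℤ))) • (f (Sum.inr w) *
                  (if degB' w = degB' y + 1 then cls (mD w y) else 0)) :=
              fun w => smul_mul_assoc _ _ _
            rw [Finset.sum_congr rfl fun w _ => h1 w, ← Finset.smul_sum]
            have := hcycr y
            have h2 : (∑ w, f (Sum.inr w) *
                (if degB' w = degB' y + 1 then cls (mD w y) else 0))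
                = -(((nn-1).negOnePow : ℤ) • ∑ x, f (Sum.inl x) *
                  (if degB x = degB' y then cls (ν x y) else 0)) := by
              rw [eq_neg_iff_add_eq_zero, add_comm]
              exact this
            rw [h2, smul_neg, neg_smul, neg_neg, ← mul_smul, npowZ_mul,
              npow_congr (a := nn - 1 + (nn - 1)) (b := 0) (by omega),
              Int.negOnePow_zero, Units.val_one, one_smul]⟩
      rw [show nn - 1 + 1 = nn from by ring] at hvmem
      have hveq' : ∀ zb : B, f (Sum.inl zb)
          = ∑ x, v x * (if degB x = degB zb + 1 then cls (mC x zb) else 0) :=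
        fun zb => congrFun hveq zb
      -- step 2: correct the `B'`-component and use surjectivity on homology
      obtain ⟨u, humem, hucyc, z, hzmem, hzeq⟩ := (hQI nn).1
        (fun y => f (Sum.inr y) - (nn.negOnePow : ℤ) •
          ∑ x, v x * (if degB x = degB' y then cls (ν x y) else 0))
        (fun y hy => by
          show f (Sum.inr y) - _ = 0
          rw [hbsupp y hy, hpsi_supp nn v hvmem y hy, smul_zero, sub_zero])
        (by
          funext y
          show (∑ w, (f (Sum.inr w) - (nn.negOnePow : ℤ) •
            ∑ x, v x * (if degB x = degB' w then cls (ν x w) else 0)) *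
            (if degB' w = degB' y + 1 then cls (mD w y) else 0)) = 0
          have hexp : ∀ w : B', (f (Sum.inr w) - (nn.negOnePow : ℤ) •
              ∑ x, v x * (if degB x = degB' w then cls (ν x w) else 0)) *
              (if degB' w = degB' y + 1 then cls (mD w y) else 0)
              = f (Sum.inr w) * (if degB' w = degB' y + 1 then cls (mD w y) else 0)
                - (nn.negOnePow : ℤ) •
                  ((∑ x, v x * (if degB x = degB' w then cls (ν x w) else 0)) *
                    (if degB' w = degB' y + 1 then cls (mD w y) else 0)) := by
            intro w
            rw [sub_mul, smul_mul_assoc]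
          rw [Finset.sum_congr rfl fun w _ => hexp w, Finset.sum_sub_distrib,
            ← Finset.smul_sum, hchain v y]
          have h3 : (∑ zb, (∑ x, v x *
              (if degB x = degB zb + 1 then cls (mC x zb) else 0)) *
              (if degB zb = degB' y then cls (ν zb y) else 0))
              = ∑ x, f (Sum.inl x) * (if degB x = degB' y then cls (ν x y) else 0) := by
            refine Finset.sum_congr rfl fun zb _ => ?_
            rw [← hveq' zb]
          rw [h3]
          have h4 := hcycr y
          have h5 : (nn.negOnePow : ℤ) • ∑ x, f (Sum.inl x) *
              (if degB x = degB' y then cls (ν x y) else 0)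
              = ∑ w, f (Sum.inr w) *
                (if degB' w = degB' y + 1 then cls (mD w y) else 0) := by
            have h6 : (∑ w, f (Sum.inr w) *
                (if degB' w = degB' y + 1 then cls (mD w y) else 0))
                = -(((nn-1).negOnePow : ℤ) • ∑ x, f (Sum.inl x) *
                  (if degB x = degB' y then cls (ν x y) else 0)) := by
              rw [eq_neg_iff_add_eq_zero, add_comm]
              exact h4
            rw [h6, ← neg_smul,
              npow_anti (a := nn) (b := nn - 1) (by omega)]
          rw [← h5, sub_self])
      -- assemble the preimage
      refine ⟨Sum.elim (fun x => v x + (nn.negOnePow : ℤ) • u x) (fun y => -(z y)),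
        ?_, ?_⟩
      · rintro (x | y) he
        · show v x + (nn.negOnePow : ℤ) • u x = 0
          have hx : degB x ≠ nn := by
            simp only [coneDeg, Sum.elim_inl] at he
            omega
          rw [hvmem x hx, humem x hx, smul_zero, add_zero]
        · show -(z y) = 0
          have hy : degB' y ≠ nn + 1 := by
            simp only [coneDeg, Sum.elim_inr] at he
            exact he
          rw [hzmem y hy, neg_zero]
      · funext e
        cases e with
        | inl zb =>
          rw [hdHinl]
          simp only [Sum.elim_inl, Sum.elim_inr]
          show f (Sum.inl zb) = ∑ x, (v x + (nn.negOnePow : ℤ) • u x) *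
            (if degB x = degB zb + 1 then cls (mC x zb) else 0)
          have : (∑ x, (v x + (nn.negOnePow : ℤ) • u x) *
              (if degB x = degB zb + 1 then cls (mC x zb) else 0))
              = (∑ x, v x * (if degB x = degB zb + 1 then cls (mC x zb) else 0))
                + (nn.negOnePow : ℤ) • ∑ x, u x *
                  (if degB x = degB zb + 1 then cls (mC x zb) else 0) := by
            rw [Finset.smul_sum, ← Finset.sum_add_distrib]
            exact Finset.sum_congr rfl fun x _ => by rw [add_mul, smul_mul_assoc]
          rw [this, show (∑ x, u x * (if degB x = degB zb + 1 then cls (mC x zb) else 0))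
              = 0 from congrFun hucyc zb, smul_zero, add_zero]
          exact hveq' zb
        | inr y =>
          rw [hdHinr]
          simp only [Sum.elim_inl, Sum.elim_inr]
          show f (Sum.inr y) = _ + ∑ w, -(z w) *
            (if degB' w = degB' y + 1 then cls (mD w y) else 0)
          rw [hsign nn (fun x => v x + (nn.negOnePow : ℤ) • u x)
            (fun x hx => by
              show v x + (nn.negOnePow : ℤ) • u x = 0
              rw [hvmem x hx, humem x hx, smul_zero, add_zero]) y]
          rw [hpsi_add (nn.negOnePow : ℤ) v u y]
          have hzeq' : (∑ x, u x * (if degB x = degB' y then cls (ν x y) else 0))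
              - (f (Sum.inr y) - (nn.negOnePow : ℤ) •
                ∑ x, v x * (if degB x = degB' y then cls (ν x y) else 0))
              = ∑ w, z w * (if degB' w = degB' y + 1 then cls (mD w y) else 0) :=
            congrFun hzeq y
          have hneg : (∑ w, -(z w) * (if degB' w = degB' y + 1 then cls (mD w y) else 0))
              = -∑ w, z w * (if degB' w = degB' y + 1 then cls (mD w y) else 0) := by
            rw [← Finset.sum_neg_distrib]
            exact Finset.sum_congr rfl fun w _ => neg_mul _ _
          rw [hneg, ← hzeq']
          rw [smul_add, ← mul_smul, npowZ_mul,
            npow_congr (a := nn + nn) (b := 0) (by omega),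
            Int.negOnePow_zero, Units.val_one, one_smul]
          abel
    -- homotopy over H for the lifted cone
    obtain ⟨hmat, hmat_supp, hmat_id⟩ := homotopy_exists (deg := coneDeg degB degB')
      (M := fun e e' => cls (coneM degB mC mD ν e e')) hdegE0 hC2 hEXH
    -- lift the homotopy entries to `ℛ 0`
    have hhch : ∀ e e' : B ⊕ B', ∃ r : R, r ∈ ℛ 0 ∧ cls r = hmat e e' := by
      intro e e'
      obtain ⟨a, ha, hc⟩ := hcls_surj (hmat e e')
      exact ⟨a, ha, hc⟩
    set hh : (B ⊕ B') → (B ⊕ B') → R := fun e e' =>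
      if coneDeg degB degB' e' = coneDeg degB degB' e + 1
      then (hhch e e').choose else 0 with hhdef
    have hh_mem : ∀ e e', hh e e' ∈ ℛ 0 := by
      intro e e'
      rw [hhdef]
      by_cases hq : coneDeg degB degB' e' = coneDeg degB degB' e + 1
      · simp only [if_pos hq]
        exact (hhch e e').choose_spec.1
      · simp only [if_neg hq]
        exact Submodule.zero_mem _
    have hh_supp : ∀ e e',
        coneDeg degB degB' e' ≠ coneDeg degB degB' e + 1 → hh e e' = 0 := by
      intro e e' hq
      rw [hhdef]
      simp only [if_neg hq]
    have hh_cls : ∀ e e', cls (hh e e') = hmat e e' := by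
      intro e e'
      rw [hhdef]
      by_cases hq : coneDeg degB degB' e' = coneDeg degB degB' e + 1
      · simp only [if_pos hq]
        exact (hhch e e').choose_spec.2
      · simp only [if_neg hq]
        rw [map_zero, hmat_supp e e' hq]
    have hdh : ∀ e e', d (hh e e') = 0 := fun e e' =>
      hRz (i := -1) (mem_cast (hd_mem _ _ (hh_mem e e')) (by omega)) (by omega)
    -- the correction matrix `uu` in `ℛ 1`
    have hHYPex : ∀ e e'' : B ⊕ B', coneDeg degB degB' e'' = coneDeg degB degB' e →
        ∃ u' : R, u' ∈ ℛ 1 ∧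
          (∑ e', hh e e' * coneM degB mC mD ν e' e'')
            + (∑ b, coneM degB mC mD ν e b * hh b e'')
          = (if e'' = e then 1 else 0) + d u' := by
      intro e e'' hdeq
      have hX1 : ∀ e' : B ⊕ B', hh e e' * coneM degB mC mD ν e' e'' ∈ ℛ 0 := by
        intro e'
        by_cases hq : coneDeg degB degB' e' = coneDeg degB degB' e + 1
        · exact mem_cast (hSetup.hmul (hh_mem e e') (hTE.mem e' e'')) (by omega)
        · rw [hh_supp e e' hq, zero_mul]
          exact Submodule.zero_mem _
      have hX2 : ∀ b : B ⊕ B', coneM degB mC mD ν e b * hh b e'' ∈ ℛ 0 := by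
        intro b
        by_cases hq : coneDeg degB degB' e'' = coneDeg degB degB' b + 1
        · exact mem_cast (hSetup.hmul (hTE.mem e b) (hh_mem b e'')) (by omega)
        · rw [hh_supp b e'' hq, mul_zero]
          exact Submodule.zero_mem _
      have hifmem : (if e'' = e then (1:R) else 0) ∈ ℛ 0 := by
        split
        · exact SetLike.one_mem_graded _
        · exact Submodule.zero_mem _
      have hXmem : (∑ e', hh e e' * coneM degB mC mD ν e' e'')
          + (∑ b, coneM degB mC mD ν e b * hh b e'')
          - (if e'' = e then 1 else 0) ∈ ℛ 0 :=
        sub_mem (add_mem (Submodule.sum_mem _ fun e' _ => hX1 e')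
          (Submodule.sum_mem _ fun b _ => hX2 b)) hifmem
      have hXcls : cls ((∑ e', hh e e' * coneM degB mC mD ν e' e'')
          + (∑ b, coneM degB mC mD ν e b * hh b e''))
          = (if e'' = e then 1 else 0) := by
        rw [map_add, map_sum, map_sum]
        have h1 : ∀ e' : B ⊕ B', cls (hh e e' * coneM degB mC mD ν e' e'')
            = hmat e e' * (if coneDeg degB degB' e' = coneDeg degB degB' e'' + 1
              then cls (coneM degB mC mD ν e' e'') else 0) := by
          intro e'
          by_cases hq : coneDeg degB degB' e' = coneDeg degB degB' e + 1
          · rw [hcls_mul _ (hh_mem e e') _ (mem_cast (hTE.mem e' e'') (by omega)),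
              hh_cls, if_pos (by omega)]
          · rw [hh_supp e e' hq, zero_mul, map_zero, ← hh_cls, hh_supp e e' hq,
              map_zero, zero_mul]
        have h2 : ∀ b : B ⊕ B', cls (coneM degB mC mD ν e b * hh b e'')
            = (if coneDeg degB degB' e = coneDeg degB degB' b + 1
              then cls (coneM degB mC mD ν e b) else 0) * hmat b e'' := by
          intro b
          by_cases hq : coneDeg degB degB' e'' = coneDeg degB degB' b + 1
          · rw [hcls_mul _ (mem_cast (hTE.mem e b) (by omega)) _ (hh_mem b e''),
              hh_cls, if_pos (by omega)]
          · rw [hh_supp b e'' hq, mul_zero, map_zero, hmat_supp b e'' hq, mul_zero]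
        rw [Finset.sum_congr rfl fun e' _ => h1 e',
          Finset.sum_congr rfl fun b _ => h2 b]
        exact hmat_id e e''
      have hclsif : cls (if e'' = e then (1:R) else 0) = (if e'' = e then (1:H) else 0) := by
        split
        · exact hcls_one
        · exact map_zero cls
      obtain ⟨u', hu'mem, hu'eq⟩ := (hcls_ker _ hXmem).mp
        (by rw [map_sub, hXcls, hclsif, sub_self])
      refine ⟨u', hu'mem, ?_⟩
      rw [← hu'eq]
      abel
    set uu : (B ⊕ B') → (B ⊕ B') → R := fun e e'' =>
      if hq : coneDeg degB degB' e'' = coneDeg degB degB' e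
      then (hHYPex e e'' hq).choose else 0 with huudef
    have uu_mem : ∀ e e'', uu e e'' ∈ ℛ 1 := by
      intro e e''
      rw [huudef]
      by_cases hq : coneDeg degB degB' e'' = coneDeg degB degB' e
      · simp only [dif_pos hq]
        exact (hHYPex e e'' hq).choose_spec.1
      · simp only [dif_neg hq]
        exact Submodule.zero_mem _
    have uu_supp : ∀ e e'',
        coneDeg degB degB' e'' ≠ coneDeg degB degB' e → uu e e'' = 0 := by
      intro e e'' hq
      rw [huudef]
      simp only [dif_neg hq]
    have hHYP : ∀ e e'' : B ⊕ B', coneDeg degB degB' e'' = coneDeg degB degB' e →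
        (∑ e', hh e e' * coneM degB mC mD ν e' e'')
          + (∑ b, coneM degB mC mD ν e b * hh b e'')
        = (if e'' = e then 1 else 0) + d (uu e e'') := by
      intro e e'' hq
      have := (hHYPex e e'' hq).choose_spec.2
      rw [huudef]
      simp only [dif_pos hq]
      exact this
    have hEXF := contraction_exact hSetup hTE hdegE0 hh_mem hh_supp hdh
      uu_mem uu_supp hHYP
    -- formulas for `DC`, `DD`, `ΨF` on homogeneous elements
    have hDCf : ∀ (k : ℤ) (c : B → F), (∀ x, c x ∈ ℱ (k - degB x)) → ∀ zb : B,
        DC c zb = dF (c zb)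
          + ∑ x, ((k - degB x).negOnePow : ℤ) • act (c x) (mC x zb) := by
      intro k c hc zb
      have h1 : DC c = ∑ x, DC (Pi.single x (c x)) := by
        rw [← map_sum]
        exact congrArg _ (Finset.univ_sum_single c).symm
      rw [h1, Finset.sum_apply]
      have h2 : ∀ x, DC (Pi.single x (c x)) zb
          = (Pi.single x (dF (c x)) : B → F) zb
            + ((k - degB x).negOnePow : ℤ) • act (c x) (mC x zb) := by
        intro x
        rw [hDC (k - degB x) (c x) (hc x) x]
        simp only [Pi.add_apply, Pi.smul_apply]
      rw [Finset.sum_congr rfl fun x _ => h2 x, Finset.sum_add_distrib]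
      congr 1
      have hs := congrFun (Finset.univ_sum_single (fun x => dF (c x))) zb
      rw [Finset.sum_apply] at hs
      exact hs
    have hDDf : ∀ (k : ℤ) (c' : B' → F), (∀ y, c' y ∈ ℱ (k - degB' y)) → ∀ y : B',
        DD c' y = dF (c' y)
          + ∑ w, ((k - degB' w).negOnePow : ℤ) • act (c' w) (mD w y) := by
      intro k c' hc' y
      have h1 : DD c' = ∑ w, DD (Pi.single w (c' w)) := by
        rw [← map_sum]
        exact congrArg _ (Finset.univ_sum_single c').symm
      rw [h1, Finset.sum_apply]
      have h2 : ∀ w, DD (Pi.single w (c' w)) y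
          = (Pi.single w (dF (c' w)) : B' → F) y
            + ((k - degB' w).negOnePow : ℤ) • act (c' w) (mD w y) := by
        intro w
        rw [hDD (k - degB' w) (c' w) (hc' w) w]
        simp only [Pi.add_apply, Pi.smul_apply]
      rw [Finset.sum_congr rfl fun w _ => h2 w, Finset.sum_add_distrib]
      congr 1
      have hs := congrFun (Finset.univ_sum_single (fun w => dF (c' w))) y
      rw [Finset.sum_apply] at hs
      exact hs
    have hPSf : ∀ (c : B → F) (y : B'), ΨF c y = ∑ x, act (c x) (ν x y) := by
      intro c y
      have h1 : ΨF c = ∑ x, ΨF (Pi.single x (c x)) := by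
        rw [← map_sum]
        exact congrArg _ (Finset.univ_sum_single c).symm
      rw [h1, Finset.sum_apply]
      exact Finset.sum_congr rfl fun x _ => by rw [hΨF (c x) x]
    -- `TD` on the cone in terms of `DC`, `DD`, `ΨF`
    have hpair : ∀ (k : ℤ) (c : B → F) (c' : B' → F),
        (∀ x, c x ∈ ℱ (k - 1 - degB x)) → (∀ y, c' y ∈ ℱ (k - degB' y)) →
        TD dF act (coneDeg degB degB') (coneM degB mC mD ν) k (Sum.elim c c')
        = Sum.elim (⇑DC c)
            (fun y => DD c' y + ((k-1).negOnePow : ℤ) • ΨF c y) := by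
      intro k c c' hc hc'
      funext e
      cases e with
      | inl zb =>
        show dF (c zb) + (∑ e', ((k - coneDeg degB degB' e').negOnePow : ℤ) •
          act (Sum.elim c c' e') (coneM degB mC mD ν e' (Sum.inl zb))) = DC c zb
        rw [Fintype.sum_sum_type]
        simp only [Sum.elim_inl, Sum.elim_inr]
        have hz2 : ∀ w : B', ((k - coneDeg degB degB' (Sum.inr w)).negOnePow : ℤ) •
            act (c' w) (coneM degB mC mD ν (Sum.inr w) (Sum.inl zb)) = 0 := by
          intro w
          rw [show coneM degB mC mD ν (Sum.inr w) (Sum.inl zb) = 0 from rfl,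
            map_zero, smul_zero]
        rw [Finset.sum_eq_zero fun w _ => hz2 w, add_zero, hDCf (k-1) c hc zb]
        congr 1
        refine Finset.sum_congr rfl fun x _ => ?_
        rw [show coneM degB mC mD ν (Sum.inl x) (Sum.inl zb) = mC x zb from rfl,
          npow_congr (a := k - coneDeg degB degB' (Sum.inl x)) (b := k - 1 - degB x)
            (by simp only [coneDeg, Sum.elim_inl]; omega)]
      | inr y =>
        show dF (c' y) + (∑ e', ((k - coneDeg degB degB' e').negOnePow : ℤ) •
          act (Sum.elim c c' e') (coneM degB mC mD ν e' (Sum.inr y)))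
          = DD c' y + ((k-1).negOnePow : ℤ) • ΨF c y
        rw [Fintype.sum_sum_type]
        simp only [Sum.elim_inl, Sum.elim_inr]
        have hB : (∑ x, ((k - coneDeg degB degB' (Sum.inl x)).negOnePow : ℤ) •
            act (c x) (coneM degB mC mD ν (Sum.inl x) (Sum.inr y)))
            = ((k-1).negOnePow : ℤ) • ΨF c y := by
          rw [hPSf c y, Finset.smul_sum]
          refine Finset.sum_congr rfl fun x _ => ?_
          rw [show coneM degB mC mD ν (Sum.inl x) (Sum.inr y)
              = ((degB x).negOnePow : ℤ) • ν x y from rfl, map_zsmul, ← mul_smul,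
            npowZ_mul,
            npow_congr (a := k - coneDeg degB degB' (Sum.inl x) + degB x)
              (b := k - 1) (by simp only [coneDeg, Sum.elim_inl]; omega)]
        have hD : dF (c' y) + ∑ w, ((k - coneDeg degB degB' (Sum.inr w)).negOnePow : ℤ) •
            act (c' w) (coneM degB mC mD ν (Sum.inr w) (Sum.inr y)) = DD c' y := by
          rw [hDDf k c' hc' y]
          rfl
        rw [hB, ← hD]
        abel
    -- the two quasi-isomorphism clauses
    intro n
    constructor
    · -- surjectivity on homology
      intro c' hc' hdd
      have hgmem : ∀ e, Sum.elim (0 : B → F) c' e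
          ∈ ℱ (n - coneDeg degB degB' e) := by
        rintro (x | y)
        · exact Submodule.zero_mem _
        · exact hc' y
      have hcyc : TD dF act (coneDeg degB degB') (coneM degB mC mD ν) n
          (Sum.elim 0 c') = 0 := by
        rw [hpair n 0 c' (fun x => Submodule.zero_mem _) hc']
        funext e
        cases e with
        | inl zb => simp only [Sum.elim_inl, map_zero, Pi.zero_apply]
        | inr y =>
          simp only [Sum.elim_inr, map_zero, Pi.zero_apply, smul_zero, add_zero]
          exact congrFun hdd y
      obtain ⟨h', hmem, heq⟩ := hEXF n (Sum.elim 0 c') hgmem hcyc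
      have hsplit : h' = Sum.elim (fun x => h' (Sum.inl x)) (fun y => h' (Sum.inr y)) :=
        funext fun e => by cases e <;> rfl
      have hvmem : ∀ x, h' (Sum.inl x) ∈ ℱ (n + 1 - 1 - degB x) := fun x =>
        mem_cast (hmem (Sum.inl x)) (by simp only [coneDeg, Sum.elim_inl]; omega)
      have hv'mem : ∀ y, h' (Sum.inr y) ∈ ℱ (n + 1 - degB' y) := fun y =>
        mem_cast (hmem (Sum.inr y)) (by simp only [coneDeg, Sum.elim_inr]; try omega)
      rw [hsplit, hpair (n+1) _ _ hvmem hv'mem] at heq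
      have hDCv : ∀ z, DC (fun x => h' (Sum.inl x)) z = 0 := fun z =>
        (congrFun heq (Sum.inl z)).symm
      have hc'eq : ∀ y, c' y = DD (fun y => h' (Sum.inr y)) y
          + ((n+1-1).negOnePow : ℤ) • ΨF (fun x => h' (Sum.inl x)) y := fun y =>
        congrFun heq (Sum.inr y)
      have hxmem : ∀ x : B, ((n.negOnePow : ℤ) • (fun x => h' (Sum.inl x)) : B → F) x
          ∈ ℱ (n - degB x) := by
        intro x
        rw [Pi.smul_apply]
        exact Submodule.smul_of_tower_mem _ _ (mem_cast (hvmem x)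
          (show n + 1 - 1 - degB x = n - degB x by omega))
      have hymem : ∀ y : B', (-(fun y => h' (Sum.inr y)) : B' → F) y
          ∈ ℱ (n + 1 - degB' y) := fun y => Submodule.neg_mem _ (hv'mem y)
      refine ⟨(n.negOnePow : ℤ) • (fun x => h' (Sum.inl x)), hxmem,
        ?_, -(fun y => h' (Sum.inr y)), hymem, ?_⟩
      · show DC ((n.negOnePow : ℤ) • (fun x => h' (Sum.inl x))) = 0
        rw [map_zsmul]
        funext z
        rw [Pi.smul_apply, hDCv z, smul_zero, Pi.zero_apply]
      · show ΨF ((n.negOnePow : ℤ) • (fun x => h' (Sum.inl x))) - c'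
          = DD (-(fun y => h' (Sum.inr y)))
        rw [map_zsmul, map_neg]
        funext y
        simp only [Pi.sub_apply, Pi.smul_apply, Pi.neg_apply]
        rw [hc'eq y, npow_congr (a := n+1-1) (b := n) (by omega)]
        abel
    · -- injectivity on homology
      intro c hc hdc hex
      obtain ⟨w, hw, hpsi⟩ := hex
      have hgmem : ∀ e, Sum.elim c ((-(n.negOnePow : ℤ)) • w) e
          ∈ ℱ (n + 1 - coneDeg degB degB' e) := by
        rintro (x | y)
        · exact mem_cast (hc x)
            (show n - degB x = n + 1 - coneDeg degB degB' (Sum.inl x) by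
              simp only [coneDeg, Sum.elim_inl]; omega)
        · show ((-(n.negOnePow : ℤ)) • w : B' → F) y ∈ ℱ (n + 1 - degB' y)
          rw [Pi.smul_apply]
          exact Submodule.smul_of_tower_mem _ _ (hw y)
      have hcmem : ∀ x : B, c x ∈ ℱ (n + 1 - 1 - degB x) := fun x =>
        mem_cast (hc x) (by omega)
      have hwmem : ∀ y : B', ((-(n.negOnePow : ℤ)) • w : B' → F) y
          ∈ ℱ (n + 1 - degB' y) := by
        intro y
        rw [Pi.smul_apply]
        exact Submodule.smul_of_tower_mem _ _ (hw y)
      have hcyc : TD dF act (coneDeg degB degB') (coneM degB mC mD ν) (n+1)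
          (Sum.elim c ((-(n.negOnePow : ℤ)) • w)) = 0 := by
        rw [hpair (n+1) c ((-(n.negOnePow : ℤ)) • w) hcmem hwmem]
        funext e
        cases e with
        | inl zb =>
          simp only [Sum.elim_inl, Pi.zero_apply]
          exact congrFun hdc zb
        | inr y =>
          simp only [Sum.elim_inr, Pi.zero_apply]
          rw [map_zsmul, Pi.smul_apply,
            npow_congr (a := n+1-1) (b := n) (by omega),
            show ΨF c y = DD w y from congrFun hpsi y, neg_smul]
          abel
      obtain ⟨h', hmem, heq⟩ := hEXF (n+1) _ hgmem hcyc
      have hsplit : h' = Sum.elim (fun x => h' (Sum.inl x)) (fun y => h' (Sum.inr y)) :=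
        funext fun e => by cases e <;> rfl
      have hvmem : ∀ x, h' (Sum.inl x) ∈ ℱ (n + 1 + 1 - 1 - degB x) := fun x =>
        mem_cast (hmem (Sum.inl x)) (by simp only [coneDeg, Sum.elim_inl]; omega)
      have hv'mem : ∀ y, h' (Sum.inr y) ∈ ℱ (n + 1 + 1 - degB' y) := fun y =>
        mem_cast (hmem (Sum.inr y)) (by simp only [coneDeg, Sum.elim_inr]; try omega)
      rw [hsplit, hpair (n+1+1) _ _ hvmem hv'mem] at heq
      refine ⟨(fun x => h' (Sum.inl x)),
        fun x => mem_cast (hvmem x) (by omega), ?_⟩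
      funext z
      exact congrFun heq (Sum.inl z)
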